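/- Assume hypothesis (H): there exists ε > 0 such that t ↦ J_μ(t)/t is strictly decreasing on (0, ε). Then t ↦ J_μ(t)/t is strictly decreasing on all of (0,1); that is, for all 0 < u < v < 1, J_μ(u)/u > J_μ(v)/v. Consequently L_μ(x, y) > 0 for all 0 < x ≤ 1/2 and 0 < y ≤ min(2x, 1−x). -/

import Mathlib

open MeasureTheory Set Filter Topology
open scoped ENNReal

/-- The measure on `ℝ` with density `f` with respect to Lebesgue measure. -/
noncomputable def densMeasure (f : ℝ → ℝ) : Measure ℝ :=
  MeasureTheory.volume.withDensity (fun x => ENNReal.ofReal (f x))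

/-- The essential boundary of a set `Ω ⊆ ℝ`: points whose Lebesgue density in `Ω`
is neither `0` nor `1`. -/
def essBoundary (Ω : Set ℝ) : Set ℝ :=
  {x : ℝ |
    ¬ Tendsto (fun ρ : ℝ => (MeasureTheory.volume (Ω ∩ Ioo (x - ρ) (x + ρ))).toReal / (2 * ρ))
        (nhdsWithin 0 (Ioi 0)) (nhds 0) ∧
    ¬ Tendsto (fun ρ : ℝ => (MeasureTheory.volume (Ω ∩ Ioo (x - ρ) (x + ρ))).toReal / (2 * ρ))
        (nhdsWithin 0 (Ioi 0)) (nhds 1)}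

/-- The `μ`-perimeter of `Ω`: the integral of the density `f` over the essential boundary
of `Ω` with respect to the 0-dimensional Hausdorff (counting) measure. -/
noncomputable def perim (f : ℝ → ℝ) (Ω : Set ℝ) : ℝ≥0∞ :=
  ∫⁻ x in essBoundary Ω, ENNReal.ofReal (f x) ∂Measure.count

/-- The setup of the paper: an even, log-concave probability density `f` on `ℝ`,
positive exactly on the symmetric interval `(-b₀, b₀)` (with `b₀ ∈ (0, ∞]`),
together with the inverse `Finv` of the cumulative distribution function on `(0,1)`
and the isoperimetric function `J` given by `J r = f (Finv r)` on `(0,1)`,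
`J 0 = J 1 = 0`. -/
structure LogConcaveSetup where
  f : ℝ → ℝ
  b₀ : ℝ≥0∞
  hb₀ : 0 < b₀
  hf_meas : Measurable f
  hf_pos : ∀ x : ℝ, 0 < f x ↔ ENNReal.ofReal |x| < b₀
  hf_even : ∀ x : ℝ, f (-x) = f x
  hf_logConcave : ConcaveOn ℝ {x : ℝ | 0 < f x} (fun x => Real.log (f x))
  hprob : IsProbabilityMeasure (densMeasure f)
  Finv : ℝ → ℝ
  hFinv : ∀ r ∈ Ioo (0:ℝ) 1, (densMeasure f (Iic (Finv r))).toReal = r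
  J : ℝ → ℝ
  hJ : ∀ r ∈ Ioo (0:ℝ) 1, J r = f (Finv r)
  hJ0 : J 0 = 0
  hJ1 : J 1 = 0

/-- The asymmetry `λ(Ω)`: the minimum of the `μ`-measures of the symmetric differences
of `Ω` with the two half-lines of the same `μ`-measure as `Ω`. -/
noncomputable def asym (S : LogConcaveSetup) (Ω : Set ℝ) : ℝ :=
  min ((densMeasure S.f (symmDiff Ω (Iio (S.Finv ((densMeasure S.f Ω).toReal))))).toReal)
      ((densMeasure S.f (symmDiff Ω (Ioi (S.Finv (1 - (densMeasure S.f Ω).toReal))))).toReal)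

/-- The isoperimetric deficit function `K_μ`. -/
noncomputable def Kfun (J : ℝ → ℝ) (x y : ℝ) : ℝ :=
  if y ≤ x then J (x - y / 2) - J x + J (y / 2) else J (x + y / 2) - J x + J (y / 2)

/-- The convenient lower bound `L_μ` on the isoperimetric deficit function. -/
noncomputable def Lfun (J : ℝ → ℝ) (x y : ℝ) : ℝ :=
  if y ≤ x then J (y / 2) - (y / (2 * x)) * J x else J (y / 2) - (y / (2 * (1 - x))) * J x

/-!
On `(0,1)` the isoperimetric function is concave. Indeed `J r` is the right derivative at
`h = 0` of `h ↦ F (F⁻¹ r + h)`, and for each `h ≥ 0` the map `r ↦ F (F⁻¹ r + h)` is concave: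
by log-concavity `f (t + h) f s ≤ f (s + h) f t` for `s ≤ t`, so after the shift by `h` the mass
of an interval grows less than that of any interval to its left.

For a concave `J` the secant slopes over `s < u < v` decrease, hence `J u / u < J s / s` forces
`J v / v < J u / u`; the strict decrease of `t ↦ J t / t` on `(0, ε)` thus propagates to
`(0,1)`. Positivity of `L_μ` is a comparison of `J (y/2) / (y/2)` with `J x / x`, resp. with
`J (1-x) / (1-x)`, using `J (1-x) = J x`.
-/

open ProbabilityTheory

theorem ConcaveOn.div_lt_div_of_div_lt {f : ℝ → ℝ} {D : Set ℝ} (hf : ConcaveOn ℝ D f)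
    {s u v : ℝ} (hs : s ∈ D) (hv : v ∈ D) (hs0 : 0 < s) (hsu : s < u) (huv : u < v)
    (h : f u / u < f s / s) : f v / v < f u / u := by
  have hslope := hf.slope_anti_adjacent hs hv hsu huv
  have hu0 : 0 < u := hs0.trans hsu
  rw [div_lt_div_iff₀ hu0 hs0] at h
  rw [div_le_div_iff₀ (sub_pos.2 huv) (sub_pos.2 hsu)] at hslope
  rw [div_lt_div_iff₀ (hu0.trans huv) hu0]
  nlinarith [mul_pos hu0 (sub_pos.2 hsu), mul_pos (sub_pos.2 huv) (sub_pos.2 hsu)]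

theorem ConcaveOn.strictAntiOn_div_self {f : ℝ → ℝ} {b ε : ℝ} (hf : ConcaveOn ℝ (Ioo 0 b) f)
    (hε : 0 < ε) (h : StrictAntiOn (fun t => f t / t) (Ioo 0 ε)) :
    StrictAntiOn (fun t => f t / t) (Ioo 0 b) := by
  intro u hu v hv huv
  set m := min ε u
  have hm : 0 < m := lt_min hε hu.1
  have hmε : m ≤ ε := min_le_left ε u
  have hmu : m ≤ u := min_le_right ε u
  have hsmall : f (m / 2) / (m / 2) < f (m / 4) / (m / 4) :=
    h ⟨by positivity, by linarith⟩ ⟨by positivity, by linarith⟩ (by linarith)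
  have hhalf : m / 2 ∈ Ioo 0 b := ⟨by positivity, by linarith [hu.2]⟩
  have hmid : f u / u < f (m / 2) / (m / 2) :=
    hf.div_lt_div_of_div_lt ⟨by positivity, by linarith [hhalf.2]⟩ hu (by positivity) (by linarith)
      (by linarith) hsmall
  exact hf.div_lt_div_of_div_lt hhalf hv (by positivity) (by linarith) huv hmid

theorem ConcaveOn.of_tendsto {ι E : Type*} [AddCommGroup E] [Module ℝ E] {l : Filter ι}
    [l.NeBot] {g : ι → E → ℝ} {f : E → ℝ} {D : Set E} (hg : ∀ᶠ i in l, ConcaveOn ℝ D (g i))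
    (hlim : ∀ x ∈ D, Tendsto (fun i => g i x) l (𝓝 (f x))) : ConcaveOn ℝ D f := by
  obtain ⟨i, hi⟩ := hg.exists
  refine ⟨hi.1, fun x hx y hy a b ha hb hab => ?_⟩
  exact le_of_tendsto_of_tendsto (((hlim x hx).const_smul a).add ((hlim y hy).const_smul b))
    (hlim _ (hi.1 hx hy ha hb hab)) (hg.mono fun j hj => hj.2 hx hy ha hb hab)

theorem ConcaveOn.add_le_add_shift {φ : ℝ → ℝ} {D : Set ℝ} (hφ : ConcaveOn ℝ D φ) {s t h : ℝ}
    (hs : s ∈ D) (hth : t + h ∈ D) (hst : s ≤ t) (hh : 0 ≤ h) :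
    φ s + φ (t + h) ≤ φ t + φ (s + h) := by
  rcases (show s ≤ t + h by linarith).eq_or_lt with hd | hd
  · obtain rfl : s = t := by linarith
    obtain rfl : h = 0 := by linarith
    rfl
  -- `t` and `s + h` are the convex combinations of `s` and `t + h` with weights `θ`, `1 - θ`
  set θ := h / (t + h - s)
  have hθ0 : 0 ≤ θ := div_nonneg hh (by linarith)
  have hθ1 : 0 ≤ 1 - θ := sub_nonneg.2 (div_le_one_of_le₀ (by linarith) (by linarith))
  have ht := hφ.2 hs hth hθ0 hθ1 (add_sub_cancel θ 1)
  have hsh := hφ.2 hs hth hθ1 hθ0 (sub_add_cancel 1 θ)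
  have et : θ • s + (1 - θ) • (t + h) = t := by
    simp only [smul_eq_mul, θ]; field_simp; ring
  have esh : (1 - θ) • s + θ • (t + h) = s + h := by
    simp only [smul_eq_mul, θ]; field_simp; ring
  rw [et] at ht
  rw [esh] at hsh
  simp only [smul_eq_mul] at ht hsh
  linarith

theorem ofReal_shift_mul_le_of_concaveOn_log {g : ℝ → ℝ}
    (hg : ConcaveOn ℝ {x | 0 < g x} fun x => Real.log (g x)) {s t h : ℝ} (hst : s ≤ t)
    (hh : 0 ≤ h) :
    ENNReal.ofReal (g (t + h)) * ENNReal.ofReal (g s) ≤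
      ENNReal.ofReal (g (s + h)) * ENNReal.ofReal (g t) := by
  rcases le_or_gt (g s) 0 with hs | hs
  · simp [ENNReal.ofReal_eq_zero.2 hs]
  rcases le_or_gt (g (t + h)) 0 with hth | hth
  · simp [ENNReal.ofReal_eq_zero.2 hth]
  have hseg : Icc s (t + h) ⊆ {x | 0 < g x} := hg.1.ordConnected.out hs hth
  have ht : 0 < g t := hseg ⟨hst, by linarith⟩
  have hsh : 0 < g (s + h) := hseg ⟨by linarith, by linarith⟩
  have hlog := hg.add_le_add_shift hs hth hst hh
  rw [← ENNReal.ofReal_mul hth.le, ← ENNReal.ofReal_mul hsh.le]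
  refine ENNReal.ofReal_le_ofReal ?_
  rw [← Real.log_le_log_iff (by positivity) (by positivity), Real.log_mul hth.ne' hs.ne',
    Real.log_mul hsh.ne' ht.ne']
  linarith

theorem lintegral_mul_lintegral_le_of_forall {α : Type*} [MeasurableSpace α] {μ : Measure α}
    {u v : α → ℝ≥0∞} (hu : Measurable u) (hv : Measurable v) {A B : Set α}
    (h : ∀ s ∈ A, ∀ t ∈ B, u t * v s ≤ u s * v t) :
    (∫⁻ t in B, u t ∂μ) * ∫⁻ s in A, v s ∂μ ≤ (∫⁻ s in A, u s ∂μ) * ∫⁻ t in B, v t ∂μ :=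
  calc (∫⁻ t in B, u t ∂μ) * ∫⁻ s in A, v s ∂μ
      = ∫⁻ s in A, (∫⁻ t in B, u t ∂μ) * v s ∂μ := (lintegral_const_mul _ hv).symm
    _ ≤ ∫⁻ s in A, u s * ∫⁻ t in B, v t ∂μ ∂μ := by
        refine setLIntegral_mono (hu.mul_const _) fun s hs => ?_
        calc (∫⁻ t in B, u t ∂μ) * v s
            = ∫⁻ t in B, u t * v s ∂μ := (lintegral_mul_const _ hu).symm
          _ ≤ ∫⁻ t in B, u s * v t ∂μ :=
              setLIntegral_mono (hv.const_mul _) fun t ht => h s hs t ht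
          _ = u s * ∫⁻ t in B, v t ∂μ := lintegral_const_mul _ hv
    _ = (∫⁻ s in A, u s ∂μ) * ∫⁻ t in B, v t ∂μ := lintegral_mul_const _ hu

theorem ProbabilityTheory.cdf_sub_cdf {μ : Measure ℝ} [IsProbabilityMeasure μ] {a b : ℝ}
    (hab : a ≤ b) : cdf μ b - cdf μ a = μ.real (Ioc a b) := by
  have h := (cdf μ).measure_Ioc a b
  rw [measure_cdf] at h
  rw [measureReal_def, h, ENNReal.toReal_ofReal (sub_nonneg.2 (monotone_cdf μ hab))]

namespace LogConcaveSetup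

variable (S : LogConcaveSetup)

instance : IsProbabilityMeasure (densMeasure S.f) := S.hprob

instance : NullSingletonClass (densMeasure S.f) := by
  unfold densMeasure; infer_instance

def posSet : Set ℝ := {x | 0 < S.f x}

theorem isOpen_posSet : IsOpen S.posSet := by
  have : S.posSet = (fun x : ℝ => ENNReal.ofReal |x|) ⁻¹' Iio S.b₀ := by
    ext x; exact S.hf_pos x
  rw [this]
  exact isOpen_Iio.preimage (ENNReal.continuous_ofReal.comp continuous_abs)

theorem ordConnected_posSet : OrdConnected S.posSet := S.hf_logConcave.1.ordConnected

theorem continuousOn_f : ContinuousOn S.f S.posSet :=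
  (S.hf_logConcave.continuousOn S.isOpen_posSet).rexp.congr fun _ hx => (Real.exp_log hx).symm

theorem densMeasure_compl_posSet : densMeasure S.f S.posSetᶜ = 0 := by
  rw [densMeasure, withDensity_apply _ S.isOpen_posSet.measurableSet.compl]
  exact (setLIntegral_congr_fun S.isOpen_posSet.measurableSet.compl
    fun _ hx => ENNReal.ofReal_eq_zero.2 (not_lt.1 hx)).trans lintegral_zero

theorem measureReal_Ioc_eq_integral {a b : ℝ} (ha : a ∈ S.posSet) (hb : b ∈ S.posSet)
    (hab : a ≤ b) : (densMeasure S.f).real (Ioc a b) = ∫ x in a..b, S.f x := by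
  have hIcc : Icc a b ⊆ S.posSet := S.ordConnected_posSet.out ha hb
  have hint : IntegrableOn S.f (Ioc a b) :=
    ((S.continuousOn_f.mono hIcc).integrableOn_Icc).mono_set Ioc_subset_Icc_self
  have hnn : 0 ≤ᵐ[volume.restrict (Ioc a b)] S.f :=
    (ae_restrict_mem measurableSet_Ioc).mono fun x hx => (hIcc (Ioc_subset_Icc_self hx)).le
  rw [intervalIntegral.integral_of_le hab, measureReal_def, densMeasure,
    withDensity_apply _ measurableSet_Ioc, ← ofReal_integral_eq_lintegral_ofReal hint hnn,
    ENNReal.toReal_ofReal (integral_nonneg_of_ae hnn)]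

theorem strictMonoOn_cdf : StrictMonoOn (cdf (densMeasure S.f)) S.posSet := by
  intro a ha b hb hab
  have hIcc : Icc a b ⊆ S.posSet := S.ordConnected_posSet.out ha hb
  rw [← sub_pos, cdf_sub_cdf hab.le, S.measureReal_Ioc_eq_integral ha hb hab.le]
  exact intervalIntegral.intervalIntegral_pos_of_pos_on
    ((S.continuousOn_f.mono hIcc).intervalIntegrable_of_Icc hab.le)
    (fun x hx => hIcc (Ioo_subset_Icc_self hx)) hab

theorem hasDerivAt_cdf {x : ℝ} (hx : x ∈ S.posSet) :
    HasDerivAt (cdf (densMeasure S.f)) (S.f x) x := by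
  have hint : HasDerivAt (fun y => ∫ t in x..y, S.f t) (S.f x) x :=
    intervalIntegral.integral_hasDerivAt_right IntervalIntegrable.refl
      S.hf_meas.stronglyMeasurable.stronglyMeasurableAtFilter
      (S.continuousOn_f.continuousAt (S.isOpen_posSet.mem_nhds hx))
  refine (hint.const_add (cdf (densMeasure S.f) x)).congr_of_eventuallyEq ?_
  filter_upwards [S.isOpen_posSet.mem_nhds hx] with y hy
  rcases le_total x y with hxy | hyx
  · rw [← S.measureReal_Ioc_eq_integral hx hy hxy, ← cdf_sub_cdf hxy]; ring
  · rw [intervalIntegral.integral_symm, ← S.measureReal_Ioc_eq_integral hy hx hyx,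
      ← cdf_sub_cdf hyx]; ring

theorem cdf_Finv {r : ℝ} (hr : r ∈ Ioo (0:ℝ) 1) : cdf (densMeasure S.f) (S.Finv r) = r := by
  rw [cdf_eq_real]; exact S.hFinv r hr

theorem Finv_mem_posSet {r : ℝ} (hr : r ∈ Ioo (0:ℝ) 1) : S.Finv r ∈ S.posSet := by
  set x := S.Finv r
  by_contra hx
  have hcdf := S.cdf_Finv hr
  -- the interval `posSet` misses `x`, so it lies on one side of `x`
  by_cases hbelow : ∃ y ∈ S.posSet, y < x
  · obtain ⟨y, hy, hyx⟩ := hbelow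
    have hnull : densMeasure S.f (Ioi x) = 0 :=
      measure_mono_null (fun z hz hzpos =>
        hx (S.ordConnected_posSet.out hy hzpos ⟨hyx.le, le_of_lt hz⟩)) S.densMeasure_compl_posSet
    rw [cdf_eq_real, ← compl_Ioi, probReal_compl_eq_one_sub measurableSet_Ioi, measureReal_def,
      hnull] at hcdf
    simp only [ENNReal.toReal_zero, sub_zero] at hcdf
    linarith [hr.2]
  · push Not at hbelow
    have hnull : densMeasure S.f (Iic x) = 0 :=
      measure_mono_null (fun z (hz : z ≤ x) hzpos =>
        hx (le_antisymm hz (hbelow z hzpos) ▸ hzpos)) S.densMeasure_compl_posSet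
    rw [cdf_eq_real, measureReal_def, hnull, ENNReal.toReal_zero] at hcdf
    linarith [hr.1]

theorem strictMonoOn_Finv : StrictMonoOn S.Finv (Ioo 0 1) := by
  intro r hr r' hr' hrr'
  by_contra! h
  have := monotone_cdf (densMeasure S.f) h
  rw [S.cdf_Finv hr, S.cdf_Finv hr'] at this
  linarith

theorem densMeasure_Iic_neg (a : ℝ) : densMeasure S.f (Iic (-a)) = densMeasure S.f (Ici a) := by
  rw [densMeasure, withDensity_apply _ measurableSet_Iic, withDensity_apply _ measurableSet_Ici,
    ← (Measure.measurePreserving_neg volume).setLIntegral_comp_preimage measurableSet_Iic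
      S.hf_meas.ennreal_ofReal]
  simp [S.hf_even]

theorem cdf_neg (a : ℝ) : cdf (densMeasure S.f) (-a) = 1 - cdf (densMeasure S.f) a := by
  rw [cdf_eq_real, cdf_eq_real, measureReal_def, S.densMeasure_Iic_neg,
    measure_congr Ioi_ae_eq_Ici.symm, ← compl_Iic, ← measureReal_def,
    probReal_compl_eq_one_sub measurableSet_Iic]

theorem Finv_one_sub {r : ℝ} (hr : r ∈ Ioo (0:ℝ) 1) : S.Finv (1 - r) = -S.Finv r := by
  have hr' : 1 - r ∈ Ioo (0:ℝ) 1 := ⟨by linarith [hr.2], by linarith [hr.1]⟩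
  have hneg : -S.Finv r ∈ S.posSet := by
    show 0 < S.f (-S.Finv r)
    rw [S.hf_even]; exact S.Finv_mem_posSet hr
  refine S.strictMonoOn_cdf.injOn (S.Finv_mem_posSet hr') hneg ?_
  rw [S.cdf_Finv hr', S.cdf_neg, S.cdf_Finv hr]

theorem J_one_sub {r : ℝ} (hr : r ∈ Ioo (0:ℝ) 1) : S.J (1 - r) = S.J r := by
  rw [S.hJ _ ⟨by linarith [hr.2], by linarith [hr.1]⟩, S.hJ r hr, S.Finv_one_sub hr, S.hf_even]

theorem lintegral_Ioc_f_add (a b h : ℝ) :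
    ∫⁻ s in Ioc a b, ENNReal.ofReal (S.f (s + h)) = densMeasure S.f (Ioc (a + h) (b + h)) := by
  rw [densMeasure, withDensity_apply _ measurableSet_Ioc,
    ← (measurePreserving_add_right volume h).setLIntegral_comp_preimage measurableSet_Ioc
      S.hf_meas.ennreal_ofReal, preimage_add_const_Ioc, add_sub_cancel_right,
    add_sub_cancel_right]

theorem concaveOn_cdf_Finv_add {h : ℝ} (hh : 0 ≤ h) :
    ConcaveOn ℝ (Ioo 0 1) fun r => cdf (densMeasure S.f) (S.Finv r + h) := by
  refine concaveOn_of_slope_anti_adjacent (convex_Ioo 0 1) fun {r₁ r r₂} hr₁ hr₂ h₁ h₂ => ?_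
  have hr : r ∈ Ioo (0:ℝ) 1 := ⟨hr₁.1.trans h₁, h₂.trans hr₂.2⟩
  set x₁ := S.Finv r₁
  set x := S.Finv r
  set x₂ := S.Finv r₂
  have hx₁ : x₁ ≤ x := (S.strictMonoOn_Finv hr₁ hr h₁).le
  have hx₂ : x ≤ x₂ := (S.strictMonoOn_Finv hr hr₂ h₂).le
  have key : densMeasure S.f (Ioc (x + h) (x₂ + h)) * densMeasure S.f (Ioc x₁ x) ≤
      densMeasure S.f (Ioc (x₁ + h) (x + h)) * densMeasure S.f (Ioc x x₂) := by
    rw [← S.lintegral_Ioc_f_add, ← S.lintegral_Ioc_f_add, densMeasure,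
      withDensity_apply _ measurableSet_Ioc, withDensity_apply _ measurableSet_Ioc]
    exact lintegral_mul_lintegral_le_of_forall
      (S.hf_meas.comp (measurable_add_const h)).ennreal_ofReal S.hf_meas.ennreal_ofReal
      fun s hs t ht => ofReal_shift_mul_le_of_concaveOn_log S.hf_logConcave
        (hs.2.trans ht.1.le) hh
  have key' := ENNReal.toReal_mono (by finiteness) key
  simp only [ENNReal.toReal_mul, ← measureReal_def] at key'
  rw [← cdf_sub_cdf (by linarith), ← cdf_sub_cdf hx₁, ← cdf_sub_cdf (by linarith),
    ← cdf_sub_cdf hx₂, S.cdf_Finv hr₁, S.cdf_Finv hr, S.cdf_Finv hr₂] at key'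
  rw [div_le_div_iff₀ (sub_pos.2 h₂) (sub_pos.2 h₁)]
  exact key'

theorem concaveOn_J : ConcaveOn ℝ (Ioo 0 1) S.J := by
  refine ConcaveOn.of_tendsto (l := 𝓝[>] (0:ℝ))
    (g := fun h r => h⁻¹ * (cdf (densMeasure S.f) (S.Finv r + h) - r)) ?_ fun r hr => ?_
  · filter_upwards [self_mem_nhdsWithin] with h (hh : 0 < h)
    exact ((S.concaveOn_cdf_Finv_add hh.le).sub (convexOn_id (convex_Ioo 0 1))).smul
      (inv_nonneg.2 hh.le)
  · have := (S.hasDerivAt_cdf (S.Finv_mem_posSet hr)).tendsto_slope_zero_right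
    rw [S.cdf_Finv hr, ← S.hJ r hr] at this
    simpa using this

end LogConcaveSetup

theorem sub_div_mul_pos_of_div_lt_div {g : ℝ → ℝ} {a t : ℝ} (ht : 0 < t)
    (h : g a / a < g t / t) : 0 < g t - t / a * g a := by
  rw [sub_pos, div_mul_comm, mul_comm]
  calc t * (g a / a) < t * (g t / t) := mul_lt_mul_of_pos_left h ht
    _ = g t := mul_div_cancel₀ _ ht.ne'

/-- Under hypothesis (H) (`t ↦ J(t)/t` strictly decreasing near `0`), the function
`t ↦ J(t)/t` is strictly decreasing on all of `(0,1)`, and consequently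
`L_μ(x, y) > 0` on the whole domain. -/
theorem hypothesisH_global (S : LogConcaveSetup)
    (hH : ∃ ε > (0:ℝ), StrictAntiOn (fun t => S.J t / t) (Ioo (0:ℝ) ε)) :
    (∀ u v : ℝ, 0 < u → u < v → v < 1 → S.J v / v < S.J u / u) ∧
    (∀ x y : ℝ, 0 < x → x ≤ 1 / 2 → 0 < y → y ≤ min (2 * x) (1 - x) →
      0 < Lfun S.J x y) := by
  obtain ⟨ε, hε, hHε⟩ := hH
  have hanti := S.concaveOn_J.strictAntiOn_div_self hε hHε
  have hdecr : ∀ u v : ℝ, 0 < u → u < v → v < 1 → S.J v / v < S.J u / u :=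
    fun u v hu huv hv => hanti ⟨hu, huv.trans hv⟩ ⟨hu.trans huv, hv⟩ huv
  refine ⟨hdecr, fun x y hx hx2 hy hxy => ?_⟩
  have hy1x : y ≤ 1 - x := hxy.trans (min_le_right _ _)
  unfold Lfun
  split_ifs with hyx
  · rw [← div_div]
    exact sub_div_mul_pos_of_div_lt_div (by positivity)
      (hdecr _ _ (by positivity) (by linarith) (by linarith))
  · rw [← div_div, ← S.J_one_sub ⟨hx, by linarith⟩]
    exact sub_div_mul_pos_of_div_lt_div (by positivity)
      (hdecr _ _ (by positivity) (by linarith) (by linarith))
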